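/- arXiv:2107.00213 — 6 statements merged into one kernel-verified Lean document; each statement's English description precedes it below -/
import Mathlib

section
/- For every integer n ≥ 1, the strong equitable vertex 1-arboricity of the complete bipartite graph K_{1,n} equals ⌈(n+2)/3⌉. That is, ⌈(n+2)/3⌉ is the minimum p such that for every q ≥ p, the vertex set of K_{1,n} can be partitioned into q classes whose sizes pairwise differ by at most 1, each class inducing a forest of maximum degree at most 1. -/
open Finset

/-- The complete multipartite graph with parts of sizes `n 0, …, n (k-1)`. -/
def CompleteMultipartite (k : ℕ) (n : Fin k → ℕ) :
    SimpleGraph (Σ i : Fin k, Fin (n i)) where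
  Adj v w := v.1 ≠ w.1
  symm := ⟨fun _ _ h => h.symm⟩
  loopless := ⟨fun _ h => h rfl⟩

/-- The sizes of any two color classes of `C` differ by at most one. -/
def EquitableSizes {V : Type} [Fintype V] {q : ℕ} (C : V → Fin q) : Prop :=
  ∀ i j : Fin q,
    (univ.filter (fun v => C v = i)).card ≤ (univ.filter (fun v => C v = j)).card + 1

/-- An equitable `(q,1)`-tree-coloring: classes of sizes pairwise differing by at
most one, each inducing a forest of maximum degree at most 1 (equivalently,
maximum degree at most 1 inside each class). -/
def IsEqTreeColoring {V : Type} [Fintype V] (G : SimpleGraph V) (q : ℕ) : Prop :=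
  ∃ C : V → Fin q, EquitableSizes C ∧
    ∀ v w x : V, C w = C v → C x = C v → G.Adj v w → G.Adj v x → w = x

/-- An equitable `q`-coloring: a proper coloring with classes of sizes pairwise
differing by at most one. -/
def IsEqColoring {V : Type} [Fintype V] (G : SimpleGraph V) (q : ℕ) : Prop :=
  ∃ C : V → Fin q, EquitableSizes C ∧ ∀ v w : V, G.Adj v w → C v ≠ C w

/-- The number `d` of Definition 1: the minimum integer `d ≥ ⌈N/q⌉` such that
either two of the `n i` are not divisible by `d`, or some `n i` satisfies
`n i / ⌊n i / d⌋ > d + 1`. -/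
noncomputable def dOf (k q : ℕ) (n : Fin k → ℕ) : ℕ :=
  sInf {d : ℕ | ((∑ i, n i) + q - 1) / q ≤ d ∧
    ((∃ i j : Fin k, i ≠ j ∧ ¬ d ∣ n i ∧ ¬ d ∣ n j) ∨
     (∃ i : Fin k, ((n i : ℚ) / ((n i / d : ℕ) : ℚ) > d + 1)))}

/-- `p(q : n₁, …, n_k) = ⌈n₁/d⌉ + ⋯ + ⌈n_k/d⌉`. -/
noncomputable def pOf (k q : ℕ) (n : Fin k → ℕ) : ℕ :=
  ∑ i, (n i + dOf k q n - 1) / dOf k q n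


/-!
A star `K_{1,n}` colored by `C` has every class inducing a graph of maximum degree at most 1
exactly when the class of the centre has at most two vertices: the leaves are pairwise
non-adjacent, while the centre is adjacent to every other vertex of its class.

Among equitable colorings of `N` vertices with `q` colors one can put a prescribed vertex in a
class of size at most `k` if and only if `N < q (k + 1)` (for `k ≥ 1`). Necessity: all other
classes have size at most `k + 1`. Sufficiency: by pigeonhole some class has size at most `k`, and
swapping the prescribed vertex into it keeps the coloring equitable. With `k = 2` and `N = n + 1`,
`K_{1,n}` has an equitable `(q,1)`-tree-coloring if and only if `n + 2 ≤ 3 q`.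
-/

section Equitable

variable {V : Type} [Fintype V] {q : ℕ}

lemma card_filter_comp_perm_eq {α : Type} [DecidableEq α] (C : V → α) (σ : Equiv.Perm V)
    (i : α) : #{v | C (σ v) = i} = #{v | C v = i} :=
  (Finset.card_equiv σ.symm (by simp)).symm

lemma EquitableSizes.comp_perm {C : V → Fin q} (hC : EquitableSizes C) (σ : Equiv.Perm V) :
    EquitableSizes (C ∘ σ) := by
  intro i j
  simp only [Function.comp_apply, card_filter_comp_perm_eq]
  exact hC i j

lemma card_filter_val_mod_eq (N : ℕ) {i : ℕ} (hi : i < q) :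
    #{t : Fin N | (t : ℕ) % q = i} = N / q + if i < N % q then 1 else 0 := by
  have hcount := Nat.count_modEq_card N (show 0 < q by omega) i
  rw [Nat.mod_eq_of_lt hi, Nat.count_eq_card_filter_range] at hcount
  rw [← hcount, ← Finset.card_map Fin.valEmbedding]
  congr 1
  ext x
  simp only [mem_map, mem_filter, mem_univ, true_and, mem_range, Fin.valEmbedding_apply,
    Nat.ModEq, Nat.mod_eq_of_lt hi]
  exact ⟨by rintro ⟨t, ht, rfl⟩; exact ⟨t.isLt, ht⟩, fun h => ⟨⟨x, h.1⟩, h.2, rfl⟩⟩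

lemma exists_equitableSizes (hq : 0 < q) : ∃ C : V → Fin q, EquitableSizes C := by
  let e := Fintype.equivFin V
  refine ⟨fun v => ⟨(e v : ℕ) % q, Nat.mod_lt _ hq⟩, fun i j => ?_⟩
  have hfiber (i : Fin q) :
      #{v | (⟨(e v : ℕ) % q, Nat.mod_lt _ hq⟩ : Fin q) = i} =
        #{t : Fin (Fintype.card V) | (t : ℕ) % q = i} := by
    simp only [Fin.ext_iff]
    exact Finset.card_equiv e (by simp)
  rw [hfiber, hfiber, card_filter_val_mod_eq _ i.isLt, card_filter_val_mod_eq _ j.isLt]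
  split_ifs <;> omega

lemma EquitableSizes.card_lt_mul {C : V → Fin q} (hC : EquitableSizes C) {k : ℕ} (i : Fin q)
    (hi : #{v | C v = i} ≤ k) : Fintype.card V < q * (k + 1) := by
  calc Fintype.card V = ∑ j, #{v | C v = j} :=
        Finset.card_eq_sum_card_fiberwise fun _ _ => Finset.mem_univ _
    _ < ∑ _j : Fin q, (k + 1) :=
        Finset.sum_lt_sum (fun j _ => (hC j i).trans (by omega)) ⟨i, by simp, by omega⟩
    _ = q * (k + 1) := by simp

lemma exists_equitableSizes_card_fiber_le {k : ℕ} (hk : 0 < k)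
    (hV : Fintype.card V < q * (k + 1)) (v₀ : V) :
    ∃ C : V → Fin q, EquitableSizes C ∧ #{v | C v = C v₀} ≤ k := by
  classical
  have hq : 0 < q := Nat.pos_of_mul_pos_right (Fintype.card_pos_iff.2 ⟨v₀⟩ |>.trans hV)
  obtain ⟨C, hC⟩ := exists_equitableSizes (V := V) hq
  obtain ⟨j, hj⟩ := Fintype.exists_card_fiber_lt_of_card_lt_mul (f := C)
    (by rwa [Fintype.card_fin])
  by_cases hne : ∃ u, C u = j
  · obtain ⟨u, hu⟩ := hne
    refine ⟨C ∘ Equiv.swap v₀ u, hC.comp_perm _, ?_⟩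
    simp only [Function.comp_apply, Equiv.swap_apply_left, hu, card_filter_comp_perm_eq]
    omega
  · have hempty : #{v | C v = j} = 0 := by simpa using hne
    exact ⟨C, hC, (hC _ j).trans (by omega)⟩

end Equitable

section Star

variable {n q : ℕ}

def starCenter (n : ℕ) : Σ i : Fin 2, Fin (![1, n] i) := ⟨0, ⟨0, Nat.one_pos⟩⟩

lemma eq_starCenter_of_fst_eq_zero {v : Σ i : Fin 2, Fin (![1, n] i)} (hv : v.1 = 0) :
    v = starCenter n := by
  obtain ⟨i, j⟩ := v
  subst hv
  have hj : (j : ℕ) < 1 := by simpa using j.isLt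
  exact Sigma.ext rfl (heq_of_eq (Fin.ext (by simp [starCenter]; omega)))

lemma card_starVertex : Fintype.card (Σ i : Fin 2, Fin (![1, n] i)) = n + 1 := by
  simp [Fin.sum_univ_two, add_comm]

lemma star_classes_maxDegree_le_one_iff (C : (Σ i : Fin 2, Fin (![1, n] i)) → Fin q) :
    (∀ v w x, C w = C v → C x = C v → (CompleteMultipartite 2 ![1, n]).Adj v w →
        (CompleteMultipartite 2 ![1, n]).Adj v x → w = x) ↔
      #{v | C v = C (starCenter n)} ≤ 2 := by
  set S : Finset (Σ i : Fin 2, Fin (![1, n] i)) := {v | C v = C (starCenter n)}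
  have hcS : starCenter n ∈ S := by simp [S]
  have hcard : #S ≤ 2 ↔ #(S.erase (starCenter n)) ≤ 1 := by
    have := Finset.card_pos.2 ⟨_, hcS⟩
    rw [Finset.card_erase_of_mem hcS]
    omega
  rw [hcard, Finset.card_le_one]
  simp only [Finset.mem_erase, Finset.mem_filter, Finset.mem_univ, true_and, S]
  constructor
  · rintro htree w ⟨hwc, hw⟩ x ⟨hxc, hx⟩
    have hleaf {y : Σ i : Fin 2, Fin (![1, n] i)} (hy : y ≠ starCenter n) :
        (starCenter n).1 ≠ y.1 := fun h => hy (eq_starCenter_of_fst_eq_zero h.symm)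
    exact htree _ w x hw hx (hleaf hwc) (hleaf hxc)
  · intro hS v w x hw hx hvw hvx
    by_cases hv : v.1 = 0
    · obtain rfl := eq_starCenter_of_fst_eq_zero hv
      exact hS w ⟨fun h => hvw (congrArg Sigma.fst h.symm), hw⟩
        x ⟨fun h => hvx (congrArg Sigma.fst h.symm), hx⟩
    · have hw0 : w.1 = 0 := by change v.1 ≠ w.1 at hvw; omega
      have hx0 : x.1 = 0 := by change v.1 ≠ x.1 at hvx; omega
      rw [eq_starCenter_of_fst_eq_zero hw0, eq_starCenter_of_fst_eq_zero hx0]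

lemma isEqTreeColoring_star_iff :
    IsEqTreeColoring (CompleteMultipartite 2 ![1, n]) q ↔ n + 1 < q * 3 := by
  constructor
  · rintro ⟨C, hC, htree⟩
    rw [← card_starVertex]
    exact hC.card_lt_mul _ ((star_classes_maxDegree_le_one_iff C).1 htree)
  · intro h
    obtain ⟨C, hC, hcenter⟩ := exists_equitableSizes_card_fiber_le (k := 2) two_pos
      (by rwa [card_starVertex]) (starCenter n)
    exact ⟨C, hC, (star_classes_maxDegree_le_one_iff C).2 hcenter⟩

end Star

theorem stmt0_general (n : ℕ) :
    IsLeast {p : ℕ | ∀ q, p ≤ q →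
        IsEqTreeColoring (CompleteMultipartite 2 ![1, n]) q}
      ⌈((n : ℚ) + 2) / 3⌉₊ := by
  have hceil (q : ℕ) : n + 1 < q * 3 ↔ ⌈((n : ℚ) + 2) / 3⌉₊ ≤ q := by
    rw [Nat.ceil_le, div_le_iff₀ three_pos]
    norm_cast
  simp only [isEqTreeColoring_star_iff, hceil]
  exact ⟨fun _ hq => hq, fun p hp => hp p le_rfl⟩

theorem stmt0 (n : ℕ) (hn : 1 ≤ n) :
    IsLeast {p : ℕ | ∀ q, p ≤ q →
        IsEqTreeColoring (CompleteMultipartite 2 ![1, n]) q}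
      ⌈((n : ℚ) + 2) / 3⌉₊ :=
  stmt0_general n
end

section
/- Let m = 3b+1 and n = 3c+2 for positive integers b and c. Then the complete bipartite graph K_{m,n} has no equitable (b+c+1, 1)-tree-coloring; that is, V(K_{m,n}) cannot be partitioned into b+c+1 classes of sizes pairwise differing by at most 1 such that each class induces a forest of maximum degree at most 1. -/
open Finset

/-!
The `b + c + 1` classes have `3(b + c + 1)` vertices in total, so equitability forces every
class to have exactly three vertices. A three-vertex class meeting both sides of `K_{m,n}`
would contain a vertex adjacent to two others of its class, so every class lies inside one
side. The side of size `3b + 1` would then be a union of classes of size three.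
-/

theorem EquitableSizes.card_fiber_eq {V : Type} [Fintype V] {q k : ℕ} {C : V → Fin q}
    (hC : EquitableSizes C) (hV : Fintype.card V = q * k) (i : Fin q) :
    #{v | C v = i} = k := by
  have hsum : ∑ j, #{v | C v = j} = ∑ _j : Fin q, k := by
    rw [← card_eq_sum_card_fiberwise (fun _ _ => mem_univ _), card_univ, hV]
    simp
  rcases lt_trichotomy #{v | C v = i} k with hlt | heq | hgt
  · have := sum_lt_sum (f := fun j => #{v | C v = j}) (g := fun _ => k)
      (fun j _ => by have := hC j i; omega) ⟨i, mem_univ _, hlt⟩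
    omega
  · exact heq
  · have := sum_lt_sum (f := fun _ => k) (g := fun j => #{v | C v = j})
      (fun j _ => by have := hC i j; omega) ⟨i, mem_univ _, hgt⟩
    omega

theorem CompleteMultipartite.fst_eq_of_color_eq {k q : ℕ} {n : Fin k → ℕ}
    {C : (Σ i : Fin k, Fin (n i)) → Fin q}
    (hC : ∀ v w x, C w = C v → C x = C v →
      (CompleteMultipartite k n).Adj v w → (CompleteMultipartite k n).Adj v x → w = x)
    {v w : Σ i : Fin k, Fin (n i)} (hvw : C v = C w) (hcard : 2 < #{x | C x = C v}) :
    v.1 = w.1 := by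
  by_contra hne
  obtain ⟨u, hu, huvw⟩ :=
    exists_mem_notMem_of_card_lt_card (s := {v, w}) (card_le_two.trans_lt hcard)
  simp only [mem_filter, mem_univ, true_and, mem_insert, mem_singleton, not_or] at hu huvw
  by_cases hu1 : u.1 = v.1
  · have hwu : w.1 ≠ u.1 := by rw [hu1]; exact Ne.symm hne
    exact huvw.1 (hC w v u hvw (hu.trans hvw) (Ne.symm hne) hwu).symm
  · exact huvw.2 (hC v w u hvw.symm hu hne (Ne.symm hu1)).symm

theorem dvd_card_of_fiber_closed {α β : Type*} [Fintype α] [DecidableEq β] (f : α → β)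
    {k : ℕ} (hf : ∀ a, #{x | f x = f a} = k) {s : Finset α}
    (hs : ∀ a ∈ s, ∀ x, f x = f a → x ∈ s) : k ∣ #s := by
  rw [card_eq_sum_card_fiberwise (f := f) (t := s.image f) fun a ha => mem_image_of_mem f ha]
  refine dvd_sum fun b hb => ?_
  obtain ⟨a, ha, rfl⟩ := mem_image.mp hb
  have hfiber : {x ∈ s | f x = f a} = ({x | f x = f a} : Finset α) := by
    ext x
    simpa using hs a ha x
  rw [hfiber, hf a]

theorem card_filter_sigma_fst_eq {α : Type*} {β : α → Type*} [Fintype α] [DecidableEq α]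
    [∀ a, Fintype (β a)] (a : α) :
    #{x : Σ a, β a | x.1 = a} = Fintype.card (β a) := by
  have : ({x : Σ a, β a | x.1 = a} : Finset _) = univ.map (Function.Embedding.sigmaMk a) := by
    ext ⟨b, y⟩
    simp only [mem_filter, mem_univ, true_and, mem_map, Function.Embedding.sigmaMk_apply]
    constructor
    · rintro rfl
      exact ⟨y, rfl⟩
    · rintro ⟨y, h⟩
      exact (congrArg Sigma.fst h).symm
  rw [this, card_map, card_univ]

theorem stmt2_general (b c : ℕ) :
    ¬ IsEqTreeColoring (CompleteMultipartite 2 ![3 * b + 1, 3 * c + 2]) (b + c + 1) := by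
  rintro ⟨C, hEq, hTree⟩
  have hcard : Fintype.card (Σ i : Fin 2, Fin (![3 * b + 1, 3 * c + 2] i)) = (b + c + 1) * 3 := by
    simp only [Fintype.card_sigma, Fintype.card_fin, Fin.sum_univ_two, Matrix.cons_val_zero,
      Matrix.cons_val_one, Matrix.cons_val_fin_one]
    ring
  have hclass := hEq.card_fiber_eq hcard
  have hside : 3 ∣ #{v : Σ i : Fin 2, Fin (![3 * b + 1, 3 * c + 2] i) | v.1 = 0} := by
    refine dvd_card_of_fiber_closed C (fun a => hclass (C a)) fun a ha x hx => ?_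
    have hxa := CompleteMultipartite.fst_eq_of_color_eq hTree hx (by rw [hclass]; norm_num)
    simp only [mem_filter, mem_univ, true_and] at ha ⊢
    rw [hxa, ha]
  rw [card_filter_sigma_fst_eq, Matrix.cons_val_zero, Fintype.card_fin] at hside
  omega

theorem stmt2 (b c : ℕ) (hb : 1 ≤ b) (hc : 1 ≤ c) :
    ¬ IsEqTreeColoring (CompleteMultipartite 2 ![3 * b + 1, 3 * c + 2]) (b + c + 1) :=
  stmt2_general b c
end

section
/- Let m = 3b+2 and n = 3c+2 for positive integers b and c. Then the strong equitable vertex 1-arboricity of K_{m,n} equals b+c+2. -/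
open Finset

/-!
A colour class of a `(q,1)`-tree-colouring of `K_{m,n}` with three or more vertices cannot meet
both sides, while classes of at most two vertices, or inside one side, are always harmless.

For `q ≥ b + c + 2` there are `m + n ≤ 2q + b + c` vertices, so an equitable partition into `q`
classes needs at most `b + c` triples besides pairs, and `b = ⌊m/3⌋`, `c = ⌊n/3⌋` triples fit
inside the two sides. For `q = b + c + 1` we have `m + n = 3q + 1`: every class has at least three
vertices, hence lies in one side, and the classes exceed `3` by only `1` in total, so the side of
size `m ≡ 2 (mod 3)` cannot be a union of classes.
-/

section Equitable

variable {V : Type} [Fintype V] {q : ℕ} {C : V → Fin q}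

lemma card_eq_sum_card_fiber (C : V → Fin q) :
    Fintype.card V = ∑ γ, #{v | C v = γ} :=
  card_eq_sum_card_fiberwise fun _ _ => mem_univ _

lemma EquitableSizes.card_le_mul (hC : EquitableSizes C) (γ : Fin q) :
    Fintype.card V ≤ q * (#{v | C v = γ} + 1) := by
  rw [card_eq_sum_card_fiber C]
  calc ∑ δ, #{v | C v = δ} ≤ ∑ _δ : Fin q, (#{v | C v = γ} + 1) :=
        sum_le_sum fun δ _ => hC δ γ
    _ = q * (#{v | C v = γ} + 1) := by simp

lemma EquitableSizes.mul_lt_card_add (hC : EquitableSizes C) (γ : Fin q) :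
    q * #{v | C v = γ} < Fintype.card V + q := by
  rw [card_eq_sum_card_fiber C]
  calc q * #{v | C v = γ} = ∑ _δ : Fin q, #{v | C v = γ} := by simp
    _ < ∑ δ, (#{v | C v = δ} + 1) :=
        sum_lt_sum (fun δ _ => hC γ δ) ⟨γ, mem_univ _, Nat.lt_succ_self _⟩
    _ = ∑ δ, #{v | C v = δ} + q := by simp [sum_add_distrib]

lemma card_filter_equiv_fin {N : ℕ} (e : V ≃ Fin N) (p : ℕ → Prop) [DecidablePred p] :
    #{v | p (e v)} = #{x ∈ range N | p x} := by
  rw [← Nat.Iio_eq_range, ← Fin.map_valEmbedding_univ, filter_map, card_map]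
  exact card_equiv e (by simp)

lemma equitableSizes_mod (hq : 0 < q) :
    EquitableSizes fun v : V => (⟨Fintype.equivFin V v % q, Nat.mod_lt _ hq⟩ : Fin q) := by
  have hcard (γ : Fin q) : #{v : V | (⟨Fintype.equivFin V v % q, Nat.mod_lt _ hq⟩ : Fin q) = γ}
      = Fintype.card V / q + if γ.val % q < Fintype.card V % q then 1 else 0 := by
    simp only [Fin.ext_iff]
    rw [card_filter_equiv_fin (Fintype.equivFin V) (· % q = γ), ← Nat.count_modEq_card _ hq,
      Nat.count_eq_card_filter_range]
    simp [Nat.ModEq, Nat.mod_eq_of_lt γ.isLt]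
  intro i j
  rw [hcard, hcard]
  split_ifs <;> omega

end Equitable

section TreeColoring

variable {V : Type} [Fintype V] {q : ℕ}

def ClassDegreeLeOne (G : SimpleGraph V) (C : V → Fin q) : Prop :=
  ∀ v w x : V, C w = C v → C x = C v → G.Adj v w → G.Adj v x → w = x

lemma classDegreeLeOne_of_small_or_independent (G : SimpleGraph V) (C : V → Fin q)
    (h : ∀ γ, #{v | C v = γ} ≤ 2 ∨ ∀ v w, C v = γ → C w = γ → ¬ G.Adj v w) :
    ClassDegreeLeOne G C := by
  intro v w x hw hx hvw hvx
  rcases h (C v) with hsmall | hindep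
  · by_contra hwx
    have : 2 < #{u | C u = C v} :=
      two_lt_card.mpr ⟨v, by simp, w, by simp [hw], x, by simp [hx], hvw.ne, hvx.ne, hwx⟩
    omega
  · exact absurd hvw (hindep v w rfl hw)

lemma isEqTreeColoring_of_card_le_two_mul (G : SimpleGraph V) (hq : 0 < q)
    (hV : Fintype.card V ≤ 2 * q) : IsEqTreeColoring G q := by
  have hC := equitableSizes_mod (V := V) hq
  refine ⟨_, hC, classDegreeLeOne_of_small_or_independent G _ fun γ => Or.inl ?_⟩
  have := hC.mul_lt_card_add γ
  by_contra h
  nlinarith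

end TreeColoring

section Multipartite

variable {k : ℕ} {n : Fin k → ℕ} {q : ℕ} {C : (Σ i : Fin k, Fin (n i)) → Fin q}

lemma ClassDegreeLeOne.fst_eq (hC : ClassDegreeLeOne (CompleteMultipartite k n) C)
    {u v w : Σ i : Fin k, Fin (n i)} (hv : C v = C u) (hw : C w = C u) (hwu : w ≠ u)
    (hwv : w ≠ v) : u.1 = v.1 := by
  by_contra huv
  by_cases hwu1 : w.1 = u.1
  · exact hwu (hC v u w hv.symm (hw.trans hv.symm) (Ne.symm huv)
      fun h => huv (hwu1.symm.trans h.symm)).symm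
  · exact hwv (hC u v w hv hw huv (Ne.symm hwu1)).symm

lemma ClassDegreeLeOne.fst_eq_of_three_le_card
    (hC : ClassDegreeLeOne (CompleteMultipartite k n) C) {γ : Fin q}
    (h3 : 3 ≤ #{v | C v = γ}) {u v : Σ i : Fin k, Fin (n i)} (hu : C u = γ) (hv : C v = γ) :
    u.1 = v.1 := by
  classical
  obtain ⟨w, hw⟩ : (({v | C v = γ} : Finset _).erase u |>.erase v).Nonempty := by
    rw [← card_pos]
    have h1 := pred_card_le_card_erase (s := ({v | C v = γ} : Finset _)) (a := u)
    have h2 := pred_card_le_card_erase (s := ({v | C v = γ} : Finset _).erase u) (a := v)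
    omega
  simp only [mem_erase, mem_filter, mem_univ, true_and] at hw
  exact hC.fst_eq (hv.trans hu.symm) (hw.2.2.trans hu.symm) hw.2.1 hw.1

end Multipartite

section Triples

variable {m n a a' : ℕ}

/-- Chosen so that each of the first `a + a'` blocks of three consecutive positions lies inside
one side. -/
def arrangePos (a a' : ℕ) (v : Σ i : Fin 2, Fin (![m, n] i)) : ℕ :=
  if v.1 = 0 then (if v.2 < 3 * a then v.2 else v.2 + 3 * a')
  else (if v.2 < 3 * a' then 3 * a + v.2 else m + v.2)

lemma arrangePos_lt (hm : 3 * a ≤ m) (hn : 3 * a' ≤ n) (v : Σ i : Fin 2, Fin (![m, n] i)) :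
    arrangePos a a' v < m + n := by
  obtain ⟨i, j⟩ := v
  have hj := j.isLt
  fin_cases i <;> simp only [arrangePos] at hj ⊢ <;> simp at hj ⊢ <;> split_ifs <;> omega

lemma arrangePos_injective (hm : 3 * a ≤ m) :
    Function.Injective (arrangePos (m := m) (n := n) a a') := by
  rintro ⟨i, j⟩ ⟨k, l⟩ h
  have hj := j.isLt
  have hl := l.isLt
  fin_cases i <;> fin_cases k <;> simp [arrangePos] at hj hl h ⊢ <;>
    first
    | exact heq_of_eq (Fin.ext (by split_ifs at h <;> omega))
    | split_ifs at h <;> omega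

lemma fst_eq_zero_iff_arrangePos_lt (hm : 3 * a ≤ m) {v : Σ i : Fin 2, Fin (![m, n] i)}
    (hv : arrangePos a a' v < 3 * (a + a')) : v.1 = 0 ↔ arrangePos a a' v < 3 * a := by
  obtain ⟨i, j⟩ := v
  have hj := j.isLt
  fin_cases i <;> simp [arrangePos] at hj hv ⊢ <;> split_ifs at hv ⊢ <;> omega

def blockIndex (t x : ℕ) : ℕ :=
  if x < 3 * t then x / 3 else t + (x - 3 * t) / 2

lemma blockIndex_lt {q t x : ℕ} (htq : t ≤ q) (hx : x < 2 * q + t) : blockIndex t x < q := by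
  unfold blockIndex
  split_ifs <;> omega

lemma card_filter_blockIndex_eq {q t γ : ℕ} (hγ : γ < q) :
    #{x ∈ range (2 * q + t) | blockIndex t x = γ} = if γ < t then 3 else 2 := by
  split_ifs with hγt
  · rw [show {x ∈ range (2 * q + t) | blockIndex t x = γ} = Ico (3 * γ) (3 * γ + 3) by
      ext x; rw [mem_filter, mem_range, mem_Ico, blockIndex]; split_ifs <;> omega]
    simp
  · rw [show {x ∈ range (2 * q + t) | blockIndex t x = γ}
        = Ico (3 * t + 2 * (γ - t)) (3 * t + 2 * (γ - t) + 2) by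
      ext x; rw [mem_filter, mem_range, mem_Ico, blockIndex]; split_ifs <;> omega]
    simp

theorem isEqTreeColoring_completeBipartite_of_triples (q : ℕ) (hm : 3 * a ≤ m)
    (hn : 3 * a' ≤ n) (hN : m + n = 2 * q + (a + a')) :
    IsEqTreeColoring (CompleteMultipartite 2 ![m, n]) q := by
  have htq : a + a' ≤ q := by omega
  have hbij : Function.Bijective
      fun v => (⟨arrangePos a a' v, arrangePos_lt hm hn v⟩ : Fin (m + n)) := by
    rw [Fintype.bijective_iff_injective_and_card]
    refine ⟨fun v w h => arrangePos_injective hm (Fin.val_eq_of_eq h), ?_⟩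
    simp [Fintype.card_sigma, Fin.sum_univ_two]
  set e := Equiv.ofBijective _ hbij
  let C : (Σ i : Fin 2, Fin (![m, n] i)) → Fin q := fun v =>
    ⟨blockIndex (a + a') (e v), blockIndex_lt htq (hN ▸ (e v).isLt)⟩
  have hcard (γ : Fin q) : #{v | C v = γ} = if (γ : ℕ) < a + a' then 3 else 2 := by
    rw [← card_filter_blockIndex_eq γ.isLt, ← hN]
    simp only [Fin.ext_iff, C]
    exact card_filter_equiv_fin e (blockIndex (a + a') · = γ)
  refine ⟨C, fun i j => ?_, classDegreeLeOne_of_small_or_independent _ C fun γ => ?_⟩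
  · rw [hcard, hcard]
    split_ifs <;> omega
  by_cases hγ : (γ : ℕ) < a + a'
  · refine Or.inr fun v w hv hw hvw => hvw ?_
    have hpos (u : Σ i : Fin 2, Fin (![m, n] i)) : (e u : ℕ) = arrangePos a a' u := rfl
    simp only [Fin.ext_iff, C, blockIndex, hpos] at hv hw
    split_ifs at hv hw with hv3 hw3 <;> try omega
    have hv' := fst_eq_zero_iff_arrangePos_lt hm hv3
    have hw' := fst_eq_zero_iff_arrangePos_lt hm hw3
    omega
  · exact Or.inl (by rw [hcard, if_neg hγ])

end Triples

lemma card_filter_fst_eq_zero (m n : ℕ) :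
    #{v : Σ i : Fin 2, Fin (![m, n] i) | v.1 = 0} = m := by
  rw [card_filter, Fintype.sum_sigma, Fin.sum_univ_two]
  simp only [Fin.isValue, ↓reduceIte, sum_const, smul_eq_mul, mul_one, one_ne_zero]
  exact card_fin m

lemma sum_mod_three_le_one {ι : Type*} (s : Finset ι) (f g : ι → ℕ) (hg : ∀ i ∈ s, 3 ≤ g i)
    (hfg : ∀ i ∈ s, f i = 0 ∨ f i = g i) (hsum : ∑ i ∈ s, g i ≤ 3 * #s + 1) :
    (∑ i ∈ s, f i) % 3 ≤ 1 := by
  classical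
  have hf : ∑ i ∈ s, f i = ∑ i ∈ s with f i ≠ 0, g i := by
    rw [← sum_filter_ne_zero]
    refine sum_congr rfl fun i hi => ?_
    rw [mem_filter] at hi
    exact (hfg i hi.1).resolve_left hi.2
  have hpos : #{i ∈ s | f i ≠ 0} * 3 ≤ ∑ i ∈ s with f i ≠ 0, g i :=
    card_nsmul_le_sum _ g 3 fun i hi => hg i (mem_filter.mp hi).1
  have hzero : #{i ∈ s | ¬ f i ≠ 0} * 3 ≤ ∑ i ∈ s with ¬ f i ≠ 0, g i :=
    card_nsmul_le_sum _ g 3 fun i hi => hg i (mem_filter.mp hi).1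
  have hsplit := sum_filter_add_sum_filter_not s (f · ≠ 0) g
  have hcard := card_filter_add_card_filter_not (s := s) (p := (f · ≠ 0))
  omega

theorem not_isEqTreeColoring_completeBipartite (m n q : ℕ) (hm : m % 3 = 2)
    (hN : m + n = 3 * q + 1) : ¬ IsEqTreeColoring (CompleteMultipartite 2 ![m, n]) q := by
  rintro ⟨C, hC, hdeg : ClassDegreeLeOne _ C⟩
  have hV : Fintype.card (Σ i : Fin 2, Fin (![m, n] i)) = 3 * q + 1 := by
    simp [Fintype.card_sigma, Fin.sum_univ_two, hN]
  have h3 (γ : Fin q) : 3 ≤ #{v | C v = γ} := by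
    have := hC.card_le_mul γ
    by_contra h
    nlinarith
  have hside (γ : Fin q) : #{v ∈ {v | v.1 = 0} | C v = γ} = 0 ∨
      #{v ∈ {v | v.1 = 0} | C v = γ} = #{v | C v = γ} := by
    by_cases hex : ∃ u, C u = γ ∧ u.1 = 0
    · obtain ⟨u, hu, hu0⟩ := hex
      refine Or.inr (congrArg card ?_)
      ext v
      simp only [mem_filter, mem_univ, true_and, and_iff_right_iff_imp]
      intro hv
      rw [← hu0]
      exact (hdeg.fst_eq_of_three_le_card (h3 γ) hu hv).symm
    · refine Or.inl (card_eq_zero.mpr (filter_eq_empty_iff.mpr fun v hv hvγ => ?_))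
      exact hex ⟨v, hvγ, (mem_filter.mp hv).2⟩
  have hsum := sum_mod_three_le_one univ _ _ (fun γ _ => h3 γ) (fun γ _ => hside γ)
    (by rw [← card_eq_sum_card_fiber, hV, card_univ, Fintype.card_fin])
  rw [← card_eq_sum_card_fiberwise fun _ _ => mem_univ _, card_filter_fst_eq_zero] at hsum
  omega

theorem stmt4_general (b c : ℕ) :
    IsLeast {p : ℕ | ∀ q, p ≤ q →
        IsEqTreeColoring (CompleteMultipartite 2 ![3 * b + 2, 3 * c + 2]) q}
      (b + c + 2) := by
  refine ⟨fun q hq => ?_, fun p hp => ?_⟩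
  · by_cases hsmall : (3 * b + 2) + (3 * c + 2) ≤ 2 * q
    · exact isEqTreeColoring_of_card_le_two_mul _ (by omega)
        (by simpa [Fintype.card_sigma, Fin.sum_univ_two] using hsmall)
    · set t := (3 * b + 2) + (3 * c + 2) - 2 * q
      exact isEqTreeColoring_completeBipartite_of_triples (a := min t b) (a' := t - min t b) q
        (by omega) (by omega) (by omega)
  · by_contra! hp_lt
    exact not_isEqTreeColoring_completeBipartite _ _ (b + c + 1) (by omega) (by omega)
      (hp (b + c + 1) (by omega))

theorem stmt4 (b c : ℕ) (hb : 1 ≤ b) (hc : 1 ≤ c) :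
    IsLeast {p : ℕ | ∀ q, p ≤ q →
        IsEqTreeColoring (CompleteMultipartite 2 ![3 * b + 2, 3 * c + 2]) q}
      (b + c + 2) :=
  stmt4_general b c
end

section
/- Let m = 3b+g and n = 3c+h where b, c are nonnegative integers and 0 ≤ g, h ≤ 2. Then for every q ≥ b+c+2, the complete bipartite graph K_{m,n} admits an equitable (q,1)-tree-coloring. Consequently va≡₁(K_{m,n}) ≤ b+c+2. -/
open Finset

/-!
Let `t = max 0 (m + n - 2q)`. As `g, h ≤ 2` and `q ≥ b + c + 2`, we have `t ≤ b + c`, so `t` classes of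
size three can be cut out of the two parts, `t₁ ≤ b` of them from the first and `t₂ ≤ c` from the
second. The remaining `m + n - 3t` vertices number at most `2(q - t)`, exactly that when `t > 0`,
so spreading them cyclically over the other `q - t` classes yields classes of size at most two
and an equitable partition. A triple inside one part is independent, and a class of at most two
vertices never holds two distinct neighbours of one of its vertices.
-/

def blockColor (t M x : ℕ) : ℕ := if x < 3 * t then x / 3 else t + (x - 3 * t) % M

section BlockColor

variable {t M : ℕ}

lemma blockColor_lt (hM : 0 < M) (x : ℕ) : blockColor t M x < t + M := by
  unfold blockColor
  split_ifs
  · omega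
  · have := Nat.mod_lt (x - 3 * t) hM
    omega

lemma blockColor_eq_iff_of_lt {k : ℕ} (hk : k < t) (x : ℕ) :
    blockColor t M x = k ↔ x / 3 = k := by
  unfold blockColor
  split_ifs <;> omega

lemma count_blockColor_of_lt {k : ℕ} (hk : k < t) (R : ℕ) :
    Nat.count (blockColor t M · = k) (3 * t + R) = 3 := by
  have hhigh : Nat.count (fun y => blockColor t M (3 * t + y) = k) R = 0 :=
    Nat.count_iff_forall_not.2 fun y _ => by unfold blockColor; split_ifs <;> omega
  have hlow : {x ∈ range (3 * t) | blockColor t M x = k} = Ico (3 * k) (3 * k + 3) := by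
    ext x
    simp only [mem_filter, mem_range, mem_Ico]
    unfold blockColor
    split_ifs <;> omega
  rw [Nat.count_add, hhigh, Nat.count_eq_card_filter_range, hlow, Nat.card_Ico]
  omega

lemma count_blockColor_of_le (hM : 0 < M) {k : ℕ} (htk : t ≤ k) (hk : k < t + M) (R : ℕ) :
    Nat.count (blockColor t M · = k) (3 * t + R) = R / M + if k - t < R % M then 1 else 0 := by
  have hlow : Nat.count (blockColor t M · = k) (3 * t) = 0 :=
    Nat.count_iff_forall_not.2 fun x hx => by simp only [blockColor, if_pos hx]; omega
  have hhigh : (fun y => blockColor t M (3 * t + y) = k) = (· ≡ k - t [MOD M]) := by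
    ext y
    simp only [blockColor, if_neg (Nat.not_lt.2 (Nat.le_add_right _ y)), Nat.ModEq,
      Nat.mod_eq_of_lt (show k - t < M by omega), Nat.add_sub_cancel_left]
    omega
  rw [Nat.count_add, hlow, zero_add]
  simp only [hhigh]
  rw [Nat.count_modEq_card _ hM, Nat.mod_eq_of_lt (by omega)]


lemma count_blockColor_le_two (hM : 0 < M) {R : ℕ} (hR : R ≤ 2 * M) {k : ℕ} (htk : t ≤ k)
    (hk : k < t + M) : Nat.count (blockColor t M · = k) (3 * t + R) ≤ 2 := by
  have hdiv : R / M ≤ 2 := Nat.div_le_of_le_mul (by omega)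
  have hmod := Nat.div_add_mod R M
  rw [count_blockColor_of_le hM htk hk]
  interval_cases hq : R / M <;> split_ifs <;> omega

lemma count_blockColor_le_succ (hM : 0 < M) {R : ℕ} (hR : R ≤ 2 * M)
    (hfull : 0 < t → R = 2 * M) {i j : ℕ} (hi : i < t + M) (hj : j < t + M) :
    Nat.count (blockColor t M · = i) (3 * t + R) ≤
      Nat.count (blockColor t M · = j) (3 * t + R) + 1 := by
  have hdiv : R / M ≤ 2 := Nat.div_le_of_le_mul (by omega)
  have hmod := Nat.div_add_mod R M
  have hmod_lt := Nat.mod_lt R hM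
  have count_eq (k : ℕ) (hk : k < t + M) : Nat.count (blockColor t M · = k) (3 * t + R) =
      if k < t then 3 else R / M + if k - t < R % M then 1 else 0 := by
    by_cases hkt : k < t
    · rw [if_pos hkt, count_blockColor_of_lt hkt R]
    · rw [if_neg hkt, count_blockColor_of_le hM (by omega) hk]
  rw [count_eq i hi, count_eq j hj]
  interval_cases hq : R / M <;> split_ifs <;> omega

end BlockColor

theorem isEqTreeColoring_of_classes {V : Type} [Fintype V] {G : SimpleGraph V} {q : ℕ}
    (C : V → Fin q) (hC : EquitableSizes C)
    (hclass : ∀ i, (∀ v w, C v = i → C w = i → ¬ G.Adj v w) ∨ #{v | C v = i} ≤ 2) :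
    IsEqTreeColoring G q := by
  refine ⟨C, hC, fun v w x hw hx hvw hvx => ?_⟩
  rcases hclass (C v) with hindep | hcard
  · exact absurd hvw (hindep v w rfl hw)
  · by_contra hwx
    have : 2 < #{u | C u = C v} := two_lt_card_iff.2
      ⟨v, w, x, by simp, by simp [hw], by simp [hx], G.ne_of_adj hvw, G.ne_of_adj hvx, hwx⟩
    omega

lemma fin_two_eq_of_eq_zero_iff {a b : Fin 2} (h : a = 0 ↔ b = 0) : a = b := by
  revert a b
  decide

section Bipartite

variable {m n : ℕ}

lemma sigma_fin_two_cases (v : Σ i : Fin 2, Fin (![m, n] i)) :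
    (v.1 = 0 ∧ (v.2 : ℕ) < m) ∨ (v.1 = 1 ∧ (v.2 : ℕ) < n) := by
  obtain ⟨i, j⟩ := v
  fin_cases i
  · exact Or.inl ⟨rfl, j.isLt⟩
  · exact Or.inr ⟨rfl, j.isLt⟩

/-- Lists the first `3 t₂` vertices of the second part, then the first part, then the rest of
the second part: with `3 t₁ ≤ m`, the positions below `3 (t₁ + t₂)` split into triples lying
inside one part. -/
def bipartitePos (t₂ : ℕ) (v : Σ i : Fin 2, Fin (![m, n] i)) : ℕ :=
  if v.1 = 0 then 3 * t₂ + v.2 else if (v.2 : ℕ) < 3 * t₂ then v.2 else m + v.2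

variable {t₂ : ℕ}

lemma bipartitePos_lt (h₂ : 3 * t₂ ≤ n) (v : Σ i : Fin 2, Fin (![m, n] i)) :
    bipartitePos t₂ v < m + n := by
  unfold bipartitePos
  rcases sigma_fin_two_cases v with ⟨hv, hlt⟩ | ⟨hv, hlt⟩ <;> simp only [hv] <;> split_ifs <;>
    omega

lemma fst_eq_zero_iff_bipartitePos (v : Σ i : Fin 2, Fin (![m, n] i)) :
    v.1 = 0 ↔ 3 * t₂ ≤ bipartitePos t₂ v ∧ bipartitePos t₂ v < 3 * t₂ + m := by
  unfold bipartitePos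
  rcases sigma_fin_two_cases v with ⟨h, hlt⟩ | ⟨h, -⟩
  · simp only [h, ↓reduceIte, true_iff]
    omega
  · simp only [h, one_ne_zero, ↓reduceIte, false_iff, not_and, not_lt]
    split_ifs <;> omega

lemma bipartitePos_injective :
    Function.Injective (bipartitePos (m := m) (n := n) t₂) := by
  intro v w h
  have hfst : v.1 = w.1 := fin_two_eq_of_eq_zero_iff <| by
    rw [fst_eq_zero_iff_bipartitePos, fst_eq_zero_iff_bipartitePos, h]
  obtain ⟨i, j⟩ := v
  obtain ⟨i', j'⟩ := w
  obtain rfl : i = i' := hfst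
  have hj : (j : ℕ) = j' := by
    unfold bipartitePos at h
    dsimp only at h
    split_ifs at h <;> omega
  rw [Fin.ext hj]

lemma card_filter_bipartitePos (h₂ : 3 * t₂ ≤ n) (p : ℕ → Prop) [DecidablePred p] :
    #{v : Σ i : Fin 2, Fin (![m, n] i) | p (bipartitePos t₂ v)} = Nat.count p (m + n) := by
  have himage :
      (univ : Finset (Σ i : Fin 2, Fin (![m, n] i))).image (bipartitePos t₂) = range (m + n) := by
    refine eq_of_subset_of_card_le (fun x hx => ?_) ?_
    · obtain ⟨v, -, rfl⟩ := mem_image.1 hx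
      exact mem_range.2 (bipartitePos_lt h₂ v)
    · rw [card_image_of_injective _ bipartitePos_injective, card_range, card_univ,
        Fintype.card_sigma]
      simp
  rw [Nat.count_eq_card_filter_range, ← himage, filter_image,
    card_image_of_injective _ bipartitePos_injective]

end Bipartite

theorem isEqTreeColoring_completeBipartite {m n q t₁ t₂ : ℕ} (h₁ : 3 * t₁ ≤ m)
    (h₂ : 3 * t₂ ≤ n) (hq : t₁ + t₂ < q) (hN : m + n ≤ 2 * q + (t₁ + t₂))
    (hfull : 0 < t₁ + t₂ → m + n = 2 * q + (t₁ + t₂)) :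
    IsEqTreeColoring (CompleteMultipartite 2 ![m, n]) q := by
  set t := t₁ + t₂
  set M := q - t
  set R := m + n - 3 * t
  have hM : 0 < M := by omega
  have hmn : m + n = 3 * t + R := by omega
  let C : (Σ i : Fin 2, Fin (![m, n] i)) → Fin q := fun v =>
    ⟨blockColor t M (bipartitePos t₂ v), by
      have := blockColor_lt (t := t) hM (bipartitePos t₂ v)
      omega⟩
  have hcard (i : Fin q) : #{v | C v = i} = Nat.count (blockColor t M · = i) (3 * t + R) := by
    rw [← hmn, ← card_filter_bipartitePos h₂]
    simp only [C, Fin.ext_iff]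
  refine isEqTreeColoring_of_classes C (fun i j => ?_) (fun i => ?_)
  · rw [hcard, hcard]
    exact count_blockColor_le_succ hM (by omega) (by omega) (by omega) (by omega)
  · by_cases hi : (i : ℕ) < t
    · left
      intro v w hv hw hadj
      have hv' := (blockColor_eq_iff_of_lt hi _).1 (congrArg Fin.val hv)
      have hw' := (blockColor_eq_iff_of_lt hi _).1 (congrArg Fin.val hw)
      have hside : v.1 = 0 ↔ w.1 = 0 := by
        rw [fst_eq_zero_iff_bipartitePos (t₂ := t₂), fst_eq_zero_iff_bipartitePos (t₂ := t₂)]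
        omega
      exact hadj (fin_two_eq_of_eq_zero_iff hside)
    · right
      rw [hcard]
      exact count_blockColor_le_two hM (by omega) (by omega) (by omega)

theorem stmt5 (b c g h : ℕ) (hg : g ≤ 2) (hh : h ≤ 2) :
    ∀ q, b + c + 2 ≤ q →
      IsEqTreeColoring (CompleteMultipartite 2 ![3 * b + g, 3 * c + h]) q := by
  intro q hq
  set t := (3 * b + g) + (3 * c + h) - 2 * q
  exact isEqTreeColoring_completeBipartite (t₁ := min t b) (t₂ := t - min t b)
    (by omega) (by omega) (by omega) (by omega) (by omega)
end

section
/- Let k ≥ 3 and n = 3b+2 for a positive integer b. Then va≡₁(K_{k*n}) = kb + k. In particular, K_{k*n} has an equitable (q,1)-tree-coloring for every q ≥ kb+k, but has no equitable (kb+k−1, 1)-tree-coloring. -/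
open Finset

/-!
In `K_{k*n}` a colour class with at least three vertices meets only one part (otherwise some
vertex of it has two neighbours in it), so there are at most `k * (n / 3)` such classes.
If there are fewer than `q` of them, some class has at most two vertices, hence by equitability
all classes have at most three, and `k * n ≤ 2 * q + k * (n / 3)`. For `n = 3b + 2` and
`q = kb + k - 1` this fails. Conversely, when `k * n ≤ 3 * q` and `k * n ≤ 2 * q + k * (n / 3)`,
list the vertices so that the first `3 * (k * (n / 3))` positions come in triples inside parts;
the first `k * n - 2 * q` of these triples and consecutive pairs of the remaining positions form
an equitable colouring (for `k * n ≤ 2 * q`, colour by position mod `q`).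
-/

section TreeColoring

variable {V : Type} [Fintype V]

def IsTreeColoring (G : SimpleGraph V) {q : ℕ} (C : V → Fin q) : Prop :=
  ∀ v w x : V, C w = C v → C x = C v → G.Adj v w → G.Adj v x → w = x

theorem isTreeColoring_of_adj_card_le_two (G : SimpleGraph V) {q : ℕ} (C : V → Fin q)
    (h : ∀ v w, C w = C v → G.Adj v w → #{x | C x = C v} ≤ 2) : IsTreeColoring G C := by
  intro v w x hw hx hvw hvx
  by_contra hwx
  refine (h v w hw hvw).not_gt (two_lt_card.2 ⟨v, ?_, w, ?_, x, ?_, hvw.ne, hvx.ne, hwx⟩) <;>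
    simp [hw, hx]

def positionColoring {N q : ℕ} (e : V ≃ Fin N) (f : ℕ → ℕ) (hf : ∀ p < N, f p < q) :
    V → Fin q :=
  fun v => ⟨f (e v), hf _ (e v).isLt⟩

theorem card_positionColoring_eq {N q : ℕ} (e : V ≃ Fin N) (f : ℕ → ℕ)
    (hf : ∀ p < N, f p < q) (j : Fin q) :
    #{v | positionColoring e f hf v = j} = #{p ∈ range N | f p = j} := by
  refine card_bij (fun v _ => (e v : ℕ)) (fun v hv => ?_) (fun v _ w _ h => e.injective (Fin.ext h))
    (fun p hp => ?_)
  · simpa [positionColoring, Fin.ext_iff] using hv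
  · simp only [mem_filter, mem_range] at hp
    exact ⟨e.symm ⟨p, hp.1⟩, by simp [positionColoring, Fin.ext_iff, hp.2], by simp⟩

theorem card_filter_mod_eq (N : ℕ) {q j : ℕ} (hj : j < q) :
    #{p ∈ range N | p % q = j} = N / q + if j < N % q then 1 else 0 := by
  have h := Nat.count_modEq_card N (j.zero_le.trans_lt hj) j
  rw [Nat.count_eq_card_filter_range, Nat.mod_eq_of_lt hj] at h
  simpa [Nat.ModEq, Nat.mod_eq_of_lt hj] using h

theorem isEqTreeColoring_of_equiv_of_le_two_mul (G : SimpleGraph V) {N q : ℕ} (e : V ≃ Fin N)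
    (hN : N ≤ 2 * q) : IsEqTreeColoring G q := by
  have hf : ∀ p < N, p % q < q := fun p hp => Nat.mod_lt _ (by omega)
  have hcard : ∀ j : Fin q, #{v | positionColoring e (· % q) hf v = j} =
      N / q + if (j : ℕ) < N % q then 1 else 0 := fun j =>
    (card_positionColoring_eq e _ hf j).trans (card_filter_mod_eq N j.isLt)
  refine ⟨positionColoring e (· % q) hf, fun i j => ?_,
    isTreeColoring_of_adj_card_le_two G _ fun v _ _ _ => ?_⟩
  · rw [hcard, hcard]
    split_ifs <;> omega
  · rw [hcard]
    have hdiv := Nat.div_add_mod N q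
    have hle : N / q ≤ 2 := Nat.div_le_of_le_mul (by rwa [mul_comm])
    interval_cases h : N / q <;> split_ifs <;> omega

def triplesThenPairs (t p : ℕ) : ℕ :=
  if p < 3 * t then p / 3 else t + (p - 3 * t) / 2

theorem card_filter_triplesThenPairs_eq {q t j : ℕ} (ht : t ≤ q) (hj : j < q) :
    #{p ∈ range (2 * q + t) | triplesThenPairs t p = j} = if j < t then 3 else 2 := by
  split_ifs with hjt
  · rw [show {p ∈ range (2 * q + t) | triplesThenPairs t p = j} = Ico (3 * j) (3 * j + 3) by
      ext p
      rw [mem_filter, mem_range, mem_Ico, triplesThenPairs]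
      split_ifs <;> omega, Nat.card_Ico]
    omega
  · rw [show {p ∈ range (2 * q + t) | triplesThenPairs t p = j} =
        Ico (3 * t + 2 * (j - t)) (3 * t + 2 * (j - t) + 2) by
      ext p
      rw [mem_filter, mem_range, mem_Ico, triplesThenPairs]
      split_ifs <;> omega, Nat.card_Ico]
    omega

theorem isEqTreeColoring_of_equiv_triples (G : SimpleGraph V) {q t : ℕ} (ht : t ≤ q)
    (e : V ≃ Fin (2 * q + t))
    (hindep : ∀ v w, (e v : ℕ) / 3 = e w / 3 → (e v : ℕ) < 3 * t → ¬ G.Adj v w) :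
    IsEqTreeColoring G q := by
  have hf : ∀ p < 2 * q + t, triplesThenPairs t p < q := by
    intro p hp
    unfold triplesThenPairs
    split_ifs <;> omega
  set C := positionColoring e (triplesThenPairs t) hf
  have hcard : ∀ j : Fin q, #{v | C v = j} = if (j : ℕ) < t then 3 else 2 := fun j =>
    (card_positionColoring_eq e _ hf j).trans (card_filter_triplesThenPairs_eq ht j.isLt)
  refine ⟨C, fun i j => ?_, isTreeColoring_of_adj_card_le_two G C fun v w hw hvw => ?_⟩
  · rw [hcard, hcard]
    split_ifs <;> omega
  · rw [hcard]
    split_ifs with hvt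
    · have hwv : triplesThenPairs t (e w) = triplesThenPairs t (e v) := congrArg Fin.val hw
      change triplesThenPairs t (e v) < t at hvt
      have : (e v : ℕ) / 3 = e w / 3 ∧ (e v : ℕ) < 3 * t := by
        unfold triplesThenPairs at hwv hvt
        split_ifs at hwv hvt <;> omega
      exact absurd hvw (hindep v w this.1 this.2)
    · exact le_rfl

end TreeColoring

section CompleteMultipartite

variable {k : ℕ}

theorem fst_eq_of_isTreeColoring {n : Fin k → ℕ} {q : ℕ} {C : (Σ i : Fin k, Fin (n i)) → Fin q}
    (hC : IsTreeColoring (CompleteMultipartite k n) C) {j : Fin q} (hj : 3 ≤ #{x | C x = j})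
    {v w : Σ i : Fin k, Fin (n i)} (hv : C v = j) (hw : C w = j) : v.1 = w.1 := by
  by_contra hvw
  have hv' : v ∈ ({x | C x = j} : Finset _) := by simp [hv]
  obtain ⟨x, hx, hxw⟩ := exists_mem_ne (s := erase {x | C x = j} v)
    (by rw [card_erase_of_mem hv']; omega) w
  obtain ⟨hxv, hx⟩ := mem_erase.1 hx
  have hxj : C x = j := (mem_filter.1 hx).2
  by_cases hxv_fst : x.1 = v.1
  · exact hxv (hC w v x (hv.trans hw.symm) (hxj.trans hw.symm) (Ne.symm hvw)
      (fun h => hvw (hxv_fst.symm.trans h.symm))).symm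
  · exact hxw (hC v w x (hw.trans hv.symm) (hxj.trans hv.symm) hvw (Ne.symm hxv_fst)).symm

theorem card_le_of_forall_fst_eq {n : ℕ} (i : Fin k) {s : Finset (Σ _ : Fin k, Fin n)}
    (hs : ∀ v ∈ s, v.1 = i) : #s ≤ n := by
  calc #s ≤ #(univ : Finset (Fin n)) :=
        card_le_card_of_injOn Sigma.snd (fun _ _ => mem_coe.2 (mem_univ _))
          fun v hv w hw h => Sigma.ext ((hs v hv).trans (hs w hw).symm) (heq_of_eq h)
    _ = n := by simp

theorem card_large_classes_le {n q : ℕ} {C : (Σ _ : Fin k, Fin n) → Fin q}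
    (hC : IsTreeColoring (CompleteMultipartite k fun _ => n) C) :
    #{j | 3 ≤ #{v | C v = j}} ≤ k * (n / 3) := by
  set T : Finset (Fin q) := {j | 3 ≤ #{v | C v = j}}
  set S : Fin k → Finset (Fin q) := fun i => {j ∈ T | ∀ v, C v = j → v.1 = i}
  have hS : ∀ i, #(S i) ≤ n / 3 := by
    intro i
    have : 3 * #(S i) ≤ n := calc
      3 * #(S i) = ∑ _j ∈ S i, 3 := by rw [sum_const, smul_eq_mul, mul_comm]
      _ ≤ ∑ j ∈ S i, #{v | C v = j} :=
        sum_le_sum fun j hj => (mem_filter.1 (mem_filter.1 hj).1).2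
      _ = #{v | C v ∈ S i} := sum_card_fiberwise_eq_card_filter _ _ _
      _ ≤ n := card_le_of_forall_fst_eq i fun v hv => (mem_filter.1 (mem_filter.1 hv).2).2 v rfl
    omega
  have hT : T ⊆ univ.biUnion S := by
    intro j hj
    have hj3 : 3 ≤ #{v | C v = j} := (mem_filter.1 hj).2
    obtain ⟨v, hv⟩ := card_pos.1 (show 0 < #{v | C v = j} by omega)
    exact mem_biUnion.2 ⟨v.1, mem_univ _, mem_filter.2
      ⟨hj, fun w hw => fst_eq_of_isTreeColoring hC hj3 hw (mem_filter.1 hv).2⟩⟩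
  calc #T ≤ #(univ.biUnion S) := card_le_card hT
    _ ≤ ∑ i, #(S i) := card_biUnion_le
    _ ≤ ∑ _i : Fin k, n / 3 := sum_le_sum fun i _ => hS i
    _ = k * (n / 3) := by simp

theorem le_of_isEqTreeColoring {n q : ℕ} (hq : k * (n / 3) < q)
    (h : IsEqTreeColoring (CompleteMultipartite k fun _ => n) q) :
    k * n ≤ 2 * q + k * (n / 3) := by
  obtain ⟨C, hEq, hC⟩ := h
  have hT := card_large_classes_le hC
  obtain ⟨j₀, hj₀⟩ : ∃ j₀, #{v | C v = j₀} ≤ 2 := by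
    by_contra! hall
    rw [filter_true_of_mem (p := fun j => 3 ≤ #{v | C v = j}) fun j _ => hall j, card_univ, Fintype.card_fin] at hT
    omega
  calc k * n = ∑ j, #{v | C v = j} := by
        rw [sum_card_fiberwise_eq_card_filter, filter_true_of_mem fun _ _ => mem_univ _]
        simp
    _ ≤ ∑ j, (2 + if 3 ≤ #{v | C v = j} then 1 else 0) := sum_le_sum fun j _ => by
        have := hEq j j₀
        split_ifs <;> omega
    _ = 2 * q + #{j | 3 ≤ #{v | C v = j}} := by
        rw [sum_add_distrib, sum_boole]
        simp [mul_comm]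
    _ ≤ 2 * q + k * (n / 3) := by omega

/-- Lists the first `3 * (n / 3)` vertices of each part, part after part, followed by the
remaining `n % 3` vertices of each part. -/
def partwiseTriplesEquiv (k n : ℕ) : (Σ _ : Fin k, Fin n) ≃ Fin (k * n) :=
  (Equiv.sigmaCongrRight fun _ =>
      (finCongr (Nat.div_add_mod n 3).symm).trans finSumFinEquiv.symm).trans <|
    (Equiv.sigmaSumDistrib _ _).trans <|
    (Equiv.sumCongr ((Equiv.sigmaEquivProd _ _).trans finProdFinEquiv)
      ((Equiv.sigmaEquivProd _ _).trans finProdFinEquiv)).trans <|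
    finSumFinEquiv.trans (finCongr (by rw [← mul_add, Nat.div_add_mod]))

theorem partwiseTriplesEquiv_apply_of_lt {n : ℕ} (i : Fin k) (x : Fin n)
    (hx : (x : ℕ) < 3 * (n / 3)) :
    (partwiseTriplesEquiv k n ⟨i, x⟩ : ℕ) = x + 3 * (n / 3) * i := by
  have : Fin.cast (Nat.div_add_mod n 3).symm x = Fin.castAdd (n % 3) ⟨x, hx⟩ := rfl
  simp only [partwiseTriplesEquiv, Equiv.trans_apply, Equiv.sigmaCongrRight_apply,
    finCongr_apply, this, finSumFinEquiv_symm_apply_castAdd]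
  simp

theorem le_partwiseTriplesEquiv_apply {n : ℕ} (i : Fin k) (x : Fin n)
    (hx : 3 * (n / 3) ≤ (x : ℕ)) :
    k * (3 * (n / 3)) ≤ partwiseTriplesEquiv k n ⟨i, x⟩ := by
  have : Fin.cast (Nat.div_add_mod n 3).symm x =
      Fin.natAdd (3 * (n / 3)) ⟨x - 3 * (n / 3), by omega⟩ := by
    ext
    simp only [Fin.val_cast, Fin.natAdd_mk]
    omega
  simp only [partwiseTriplesEquiv, Equiv.trans_apply, Equiv.sigmaCongrRight_apply,
    finCongr_apply, this, finSumFinEquiv_symm_apply_natAdd]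
  simp

theorem partwiseTriplesEquiv_div {n : ℕ} {v : Σ _ : Fin k, Fin n}
    (hv : (partwiseTriplesEquiv k n v : ℕ) < 3 * (k * (n / 3))) :
    (partwiseTriplesEquiv k n v : ℕ) / 3 / (n / 3) = v.1 := by
  obtain ⟨i, x⟩ := v
  have hx : (x : ℕ) < 3 * (n / 3) := by
    by_contra hx
    have := le_partwiseTriplesEquiv_apply i x (not_lt.1 hx)
    rw [mul_left_comm] at this
    omega
  rw [partwiseTriplesEquiv_apply_of_lt i x hx, mul_assoc, Nat.add_mul_div_left _ _ three_pos,
    Nat.add_mul_div_left _ _ (by omega), Nat.div_eq_of_lt (by omega), zero_add]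

theorem fst_eq_of_partwiseTriplesEquiv_div_three_eq {n : ℕ} {v w : Σ _ : Fin k, Fin n}
    (h : (partwiseTriplesEquiv k n v : ℕ) / 3 = partwiseTriplesEquiv k n w / 3)
    (hv : (partwiseTriplesEquiv k n v : ℕ) < 3 * (k * (n / 3))) : v.1 = w.1 :=
  Fin.ext <| by
    rw [← partwiseTriplesEquiv_div hv, ← partwiseTriplesEquiv_div (v := w) (by omega), h]

theorem isEqTreeColoring_completeMultipartite {n q : ℕ} (h3 : k * n ≤ 3 * q)
    (h : k * n ≤ 2 * q + k * (n / 3)) :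
    IsEqTreeColoring (CompleteMultipartite k fun _ => n) q := by
  by_cases h2 : k * n ≤ 2 * q
  · exact isEqTreeColoring_of_equiv_of_le_two_mul _ (partwiseTriplesEquiv k n) h2
  · refine isEqTreeColoring_of_equiv_triples _ (t := k * n - 2 * q) (by omega)
      ((partwiseTriplesEquiv k n).trans (finCongr (by omega))) fun v w hvw hv hadj => ?_
    simp only [Equiv.trans_apply, finCongr_apply, Fin.val_cast] at hvw hv
    exact hadj (fst_eq_of_partwiseTriplesEquiv_div_three_eq hvw (by omega))

end CompleteMultipartite

theorem stmt11_general (k b : ℕ) (hk : 3 ≤ k) :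
    IsLeast {p : ℕ | ∀ q, p ≤ q →
        IsEqTreeColoring (CompleteMultipartite k (fun _ => 3 * b + 2)) q}
      (k * b + k) ∧
    (∀ q, k * b + k ≤ q →
        IsEqTreeColoring (CompleteMultipartite k (fun _ => 3 * b + 2)) q) ∧
    ¬ IsEqTreeColoring (CompleteMultipartite k (fun _ => 3 * b + 2)) (k * b + k - 1) := by
  have hpart : (3 * b + 2) / 3 = b := by omega
  have hN : k * (3 * b + 2) = 3 * (k * b) + 2 * k := by ring
  have hcol : ∀ q, k * b + k ≤ q →
      IsEqTreeColoring (CompleteMultipartite k (fun _ => 3 * b + 2)) q := fun q hq =>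
    isEqTreeColoring_completeMultipartite (by omega) (by rw [hpart]; omega)
  have hnot : ¬ IsEqTreeColoring (CompleteMultipartite k (fun _ => 3 * b + 2)) (k * b + k - 1) :=
    fun h => by
      have := le_of_isEqTreeColoring (by rw [hpart]; omega) h
      rw [hpart] at this
      omega
  refine ⟨⟨hcol, fun p hp => ?_⟩, hcol, hnot⟩
  by_contra! hlt
  exact hnot (hp _ (by omega))

theorem stmt11 (k b : ℕ) (hk : 3 ≤ k) (hb : 1 ≤ b) :
    IsLeast {p : ℕ | ∀ q, p ≤ q →
        IsEqTreeColoring (CompleteMultipartite k (fun _ => 3 * b + 2)) q}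
      (k * b + k) ∧
    (∀ q, k * b + k ≤ q →
        IsEqTreeColoring (CompleteMultipartite k (fun _ => 3 * b + 2)) q) ∧
    ¬ IsEqTreeColoring (CompleteMultipartite k (fun _ => 3 * b + 2)) (k * b + k - 1) :=
  stmt11_general k b hk
end

section
/- Let k ≥ 3, k ≠ 4, and n = 3b+1 for a positive integer b. Then K_{k*n} has no equitable (kb + ⌈k/2⌉ − 1, 1)-tree-coloring. -/
open Finset

/-!
A class of size at least 3 inducing maximum degree at most 1 in `K_{k*n}` lies inside one
part, so a part of size `3b+1` contains at most `b` such classes, and there are at most `kb`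
of them. Since `q = kb + ⌈k/2⌉ - 1 > kb` for `k ≥ 3`, some class has at most 2 vertices, so by
equitability every class has at most 3. Counting vertices, `k(3b+1) ≤ 2q + kb`, i.e.
`k ≤ 2⌈k/2⌉ - 2`, which is false.
-/

def ColorClassesMaxDegreeLeOne {V β : Type*} (G : SimpleGraph V) (C : V → β) : Prop :=
  ∀ v w x, C w = C v → C x = C v → G.Adj v w → G.Adj v x → w = x

theorem Finset.sum_le_mul_card_add_card_filter {ι : Type*} {s : Finset ι} {f : ι → ℕ} {m : ℕ}
    (h : ∀ i ∈ s, f i ≤ m + 1) : ∑ i ∈ s, f i ≤ m * #s + #{i ∈ s | m + 1 ≤ f i} := by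
  calc ∑ i ∈ s, f i ≤ ∑ i ∈ s, (m + if m + 1 ≤ f i then 1 else 0) := by
        refine sum_le_sum fun i hi => ?_
        have := h i hi
        split_ifs <;> omega
    _ = m * #s + #{i ∈ s | m + 1 ≤ f i} := by
        rw [sum_add_distrib, sum_const, smul_eq_mul, mul_comm, card_filter]

namespace CompleteMultipartite

variable {k : ℕ} {n : Fin k → ℕ}

theorem card_part (i : Fin k) : #{v : Σ j : Fin k, Fin (n j) | v.1 = i} = n i := by
  have : ({v : Σ j : Fin k, Fin (n j) | v.1 = i} : Finset _) =
      ({i} : Finset _).sigma fun _ => univ := by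
    ext ⟨j, x⟩
    simp [eq_comm]
  simp [this]

theorem sum_card_colorClasses {β : Type*} [Fintype β] [DecidableEq β]
    (C : (Σ i : Fin k, Fin (n i)) → β) : ∑ c, #{v | C v = c} = ∑ i, n i := by
  rw [← card_eq_sum_card_fiberwise fun v _ => mem_univ (C v), card_univ, Fintype.card_sigma]
  simp

variable {β : Type*} [DecidableEq β] {C : (Σ i : Fin k, Fin (n i)) → β}

theorem fst_eq_of_three_le_card_colorClass
    (hC : ColorClassesMaxDegreeLeOne (CompleteMultipartite k n) C)
    {c : β} (h3 : 3 ≤ #{v | C v = c}) {v w : Σ i : Fin k, Fin (n i)}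
    (hv : C v = c) (hw : C w = c) : v.1 = w.1 := by
  by_contra hvw
  obtain ⟨z, hz, hzvw⟩ : ∃ z ∈ ({v | C v = c} : Finset _), z ∉ ({v, w} : Finset _) :=
    exists_mem_notMem_of_card_lt_card ((card_le_two).trans_lt h3)
  simp only [mem_filter, mem_univ, true_and] at hz
  simp only [mem_insert, mem_singleton, not_or] at hzvw
  by_cases hzv : z.1 = v.1
  · exact hzvw.1 (hC w v z (hv.trans hw.symm) (hz.trans hw.symm) (Ne.symm hvw)
      (show w.1 ≠ z.1 by rw [hzv]; exact Ne.symm hvw)).symm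
  · exact hzvw.2 (hC v w z (hw.trans hv.symm) (hz.trans hv.symm) hvw (Ne.symm hzv)).symm

theorem card_filter_three_le_card_colorClass_le [Fintype β]
    (hC : ColorClassesMaxDegreeLeOne (CompleteMultipartite k n) C) :
    #{c | 3 ≤ #{v | C v = c}} ≤ ∑ i, n i / 3 := by
  set A : Finset β := {c | 3 ≤ #{v | C v = c}}
  let inPart (i : Fin k) : Finset β := {c ∈ A | ∃ v, v.1 = i ∧ C v = c}
  have hA : A ⊆ univ.biUnion inPart := by
    intro c hc
    obtain ⟨v, hv⟩ := card_pos.mp (lt_of_lt_of_le (by norm_num) (mem_filter.mp hc).2)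
    exact mem_biUnion.mpr ⟨v.1, mem_univ _, mem_filter.mpr ⟨hc, v, rfl, (mem_filter.mp hv).2⟩⟩
  have hinPart (i : Fin k) : 3 * #(inPart i) ≤ n i := by
    calc 3 * #(inPart i) ≤ #{v | v.1 = i ∧ C v ∈ inPart i} := by
          refine mul_card_image_le_card_of_maps_to (fun v hv => (mem_filter.mp hv).2.2) 3 ?_
          intro c hc
          obtain ⟨hcA, u, hu, huc⟩ := mem_filter.mp hc
          have h3 : 3 ≤ #{v | C v = c} := (mem_filter.mp hcA).2
          refine h3.trans (card_le_card fun v hv => ?_)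
          have hvc : C v = c := (mem_filter.mp hv).2
          simp only [mem_filter, mem_univ, true_and] at hv ⊢
          exact ⟨⟨hu ▸ fst_eq_of_three_le_card_colorClass hC h3 hvc huc, hvc ▸ hc⟩, hvc⟩
      _ ≤ #{v : Σ j : Fin k, Fin (n j) | v.1 = i} :=
          card_le_card fun v hv => by
            simp only [mem_filter, mem_univ, true_and] at hv ⊢
            exact hv.1
      _ = n i := card_part i
  calc #A ≤ ∑ i, #(inPart i) := (card_le_card hA).trans card_biUnion_le
    _ ≤ ∑ i, n i / 3 := sum_le_sum fun i _ => by have := hinPart i; omega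

end CompleteMultipartite

open CompleteMultipartite in
theorem stmt12_general (k b : ℕ) (hk : 3 ≤ k) :
    ¬ IsEqTreeColoring (CompleteMultipartite k (fun _ => 3 * b + 1))
        (k * b + (k + 1) / 2 - 1) := by
  rintro ⟨C, hEq, hC⟩
  have hbig : #{c | 3 ≤ #{v | C v = c}} ≤ k * b := by
    simpa [show (3 * b + 1) / 3 = b by omega] using card_filter_three_le_card_colorClass_le hC
  have htotal : ∑ c, #{v | C v = c} = 3 * (k * b) + k := by
    rw [sum_card_colorClasses]
    simp only [sum_const, card_univ, Fintype.card_fin, smul_eq_mul]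
    ring
  by_cases hall : ∀ c, 3 ≤ #{v | C v = c}
  · rw [filter_true_of_mem fun c _ => hall c, card_univ, Fintype.card_fin] at hbig
    omega
  · obtain ⟨c₀, hc₀⟩ := not_forall.mp hall
    have hcount : ∑ c, #{v | C v = c} ≤
        2 * (k * b + (k + 1) / 2 - 1) + #{c | 3 ≤ #{v | C v = c}} := by
      simpa using sum_le_mul_card_add_card_filter (s := univ) (m := 2)
        fun c _ => (hEq c c₀).trans (by omega)
    omega

theorem stmt12 (k b : ℕ) (hk : 3 ≤ k) (hk4 : k ≠ 4) (hb : 1 ≤ b) :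
    ¬ IsEqTreeColoring (CompleteMultipartite k (fun _ => 3 * b + 1))
        (k * b + (k + 1) / 2 - 1) :=
  stmt12_general k b hk
end
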